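/- Let a > 0 and let λ be a nonzero real number. Let p : ℝ → ℝ be continuous, even (p(−t) = p(t) for all t), with p(t) = 0 whenever |t| ≥ a, and suppose ∫_{−a}^{a} p(t)·cos(λt) dt = 0. Define ω(t) = −(1/λ)·∫_{−a}^{t} sin(λ(t−τ))·p(τ) dτ. Then ω(t) = 0 for every t with |t| ≥ a. (In particular, the solution of ω'' + λ²ω = −p with ω(−a) = ω'(−a) = 0 is supported in [−a,a].) -/

import Mathlib

/-!
Expanding `sin (λ (t - τ))` shows that for `t ≥ a` the Duhamel integral over the support
`[-a, a]` of `p` is `sin (λ t)` times the cosine moment of `p` minus `cos (λ t)` times its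
sine moment. The first vanishes by hypothesis and the second because `τ ↦ p τ * sin (λ τ)` is
odd.
For `t ≤ -a` the integral runs outside the support of `p` altogether.
-/

open Real intervalIntegral Set

theorem integral_eq_zero_of_odd {f : ℝ → ℝ} (hf : ∀ x, f (-x) = -f x) (a : ℝ) :
    ∫ x in (-a)..a, f x = 0 := by
  have h := integral_comp_neg (a := -a) (b := a) f
  simp only [hf, integral_neg, neg_neg] at h
  linarith

theorem integral_mul_sin_eq_zero_of_even {p : ℝ → ℝ} (hp : ∀ x, p (-x) = p x) (c a : ℝ) :
    ∫ x in (-a)..a, p x * sin (c * x) = 0 :=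
  integral_eq_zero_of_odd (fun x => by rw [hp, mul_neg, sin_neg, mul_neg]) a

theorem integral_sin_sub_mul_eq {p : ℝ → ℝ} (hp : Continuous p) (c t u v : ℝ) :
    ∫ x in u..v, sin (c * (t - x)) * p x =
      sin (c * t) * (∫ x in u..v, p x * cos (c * x))
        - cos (c * t) * ∫ x in u..v, p x * sin (c * x) := by
  have hcos : Continuous fun x => sin (c * t) * (p x * cos (c * x)) := by fun_prop
  have hsin : Continuous fun x => cos (c * t) * (p x * sin (c * x)) := by fun_prop
  rw [← integral_const_mul, ← integral_const_mul,
    ← integral_sub (hcos.intervalIntegrable u v) (hsin.intervalIntegrable u v)]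
  congr 1 with x
  rw [mul_sub, sin_sub]
  ring

theorem integral_mul_eq_zero_of_eqOn_zero {f p : ℝ → ℝ} {u v : ℝ}
    (hp : EqOn p 0 (uIcc u v)) : ∫ x in u..v, f x * p x = 0 := by
  rw [integral_congr (g := fun _ => 0) fun x hx => by simp [hp hx]]
  exact integral_zero

theorem stmt_10 (a lam : ℝ)
    (p : ℝ → ℝ) (hp : Continuous p) (heven : ∀ t : ℝ, p (-t) = p t)
    (hsupp : ∀ t : ℝ, a ≤ |t| → p t = 0)
    (hmom : (∫ t in (-a)..a, p t * Real.cos (lam * t)) = 0)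
    (ω : ℝ → ℝ)
    (hω : ∀ t : ℝ, ω t = -(1 / lam) * ∫ τ in (-a)..t, Real.sin (lam * (t - τ)) * p τ) :
    ∀ t : ℝ, a ≤ |t| → ω t = 0 := by
  intro t ht
  rw [hω t, mul_eq_zero]
  right
  rcases le_abs'.mp ht with hneg | hpos
  · refine integral_mul_eq_zero_of_eqOn_zero fun x hx => hsupp x ?_
    rw [uIcc_of_ge hneg] at hx
    exact le_abs'.mpr (Or.inl hx.2)
  · have hcont : Continuous fun τ => sin (lam * (t - τ)) * p τ := by fun_prop
    have houter : ∫ τ in a..t, sin (lam * (t - τ)) * p τ = 0 := by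
      refine integral_mul_eq_zero_of_eqOn_zero fun x hx => hsupp x ?_
      rw [uIcc_of_le hpos] at hx
      exact hx.1.trans (le_abs_self x)
    rw [← integral_add_adjacent_intervals (hcont.intervalIntegrable (-a) a)
      (hcont.intervalIntegrable a t), houter,
      integral_sin_sub_mul_eq hp, hmom, integral_mul_sin_eq_zero_of_even heven]
    ring
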